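/- arXiv:1007.0838 — 3 statements merged into one kernel-verified Lean document; each statement's English description precedes it below -/
import Mathlib

section
/- Let κ : ℝⁿ → ℝⁿ be linear with κ² = 1, let φ : ℝⁿ → ℝ be smooth with φ∘κ = φ, and let A be invertible with κA = Aᵗκᵗ. Then the pullback U_κ = κ* intertwines the Witten differential with itself, U_κ⁻¹ d_φ U_κ = d_φ, and intertwines the two adjoint Witten codifferentials: U_κ ∘ d_φ^{Aᵗ,*} = d_φ^{A,*} ∘ U_κ. Consequently U_κ ∘ Δ_{Aᵗ} = Δ_A ∘ U_κ, where −Δ_A = d_φ^{A,*} d_φ + d_φ d_φ^{A,*}. -/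
open Finset

noncomputable section

abbrev FormIdx (n k : ℕ) := {s : Finset (Fin n) // s.card = k}

abbrev KForm (n k : ℕ) := FormIdx n k → ℝ

def posIn {n : ℕ} (i : Fin n) (s : Finset (Fin n)) : ℕ := (s.filter (· < i)).card

def subEmb {n k : ℕ} (S : FormIdx n k) : Fin k → Fin n := fun j => (S.1.orderIsoOfFin S.2 j : Fin n)

/-- left exterior multiplication by the one-form `ω` -/
def wedgeOne {n k : ℕ} (ω : Fin n → ℝ) (u : KForm n k) : KForm n (k + 1) :=
  fun S => ∑ i : Fin n, if h : i ∈ S.1 then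
    (-1 : ℝ) ^ (posIn i S.1) * ω i * u ⟨S.1.erase i, by
      simp [Finset.card_erase_of_mem h, S.2]⟩ else 0

/-- interior multiplication (contraction) by the vector `x` -/
def contractV {n k : ℕ} (x : Fin n → ℝ) (v : KForm n (k + 1)) : KForm n k :=
  fun T => ∑ i : Fin n, if h : i ∉ T.1 then
    (-1 : ℝ) ^ (posIn i (insert i T.1)) * x i * v ⟨insert i T.1, by
      rw [Finset.card_insert_of_notMem h, T.2]⟩ else 0

def pderiv {n k : ℕ} (i : Fin n) (u : (Fin n → ℝ) → KForm n k) :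
    (Fin n → ℝ) → KForm n k :=
  fun x S => fderiv ℝ (fun y => u y S) x (Pi.single i 1)

/-- the exterior derivative `d = ∑ᵢ dxᵢ ∧ ∂ᵢ` -/
def extd {n k : ℕ} (u : (Fin n → ℝ) → KForm n k) : (Fin n → ℝ) → KForm n (k + 1) :=
  fun x => ∑ i : Fin n, wedgeOne (Pi.single i 1) (pderiv i u x)

/-- the Witten differential `d_φ = h d + (dφ)∧` -/
def wittenD {n k : ℕ} (h : ℝ) (φ : (Fin n → ℝ) → ℝ)
    (u : (Fin n → ℝ) → KForm n k) : (Fin n → ℝ) → KForm n (k + 1) :=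
  fun x => h • extd u x + wedgeOne (fun i => fderiv ℝ φ x (Pi.single i 1)) (u x)

/-- the Witten codifferential `d_φ^{B,*} = ∑ⱼ (−h∂ⱼ + ∂ⱼφ) ∘ (B dxⱼ)⌟`
(the formal adjoint of `d_φ` with respect to the pairing `(·|·)_B`) -/
def wittenCoD {n k : ℕ} (B : Matrix (Fin n) (Fin n) ℝ) (h : ℝ) (φ : (Fin n → ℝ) → ℝ)
    (u : (Fin n → ℝ) → KForm n (k + 1)) : (Fin n → ℝ) → KForm n k :=
  fun x => ∑ j : Fin n,
    ((-h) • pderiv j (fun y => contractV (fun i => B i j) (u y)) x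
      + (fderiv ℝ φ x (Pi.single j 1)) • contractV (fun i => B i j) (u x))

/-- the linear map on `k`-forms induced by a matrix acting on covectors -/
def formMap {n k : ℕ} (B : Matrix (Fin n) (Fin n) ℝ) (u : KForm n k) : KForm n k :=
  fun S => ∑ T : FormIdx n k, (B.submatrix (subEmb S) (subEmb T)).det * u T

/-- the pullback `U_κ = κ*` of a `k`-form by the linear map `κ` -/
def pullKappa {n k : ℕ} (κ : Matrix (Fin n) (Fin n) ℝ)
    (u : (Fin n → ℝ) → KForm n k) : (Fin n → ℝ) → KForm n k :=
  fun x => formMap κ.transpose (u (κ.mulVec x))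

section Alg
variable {n k : ℕ}

lemma subEmb_def (S : FormIdx n k) : subEmb S = S.1.orderEmbOfFin S.2 :=
  funext fun j => Finset.coe_orderIsoOfFin_apply S.1 S.2 j

lemma subEmb_strictMono (S : FormIdx n k) : StrictMono (subEmb S) := by
  rw [subEmb_def]; exact (S.1.orderEmbOfFin S.2).strictMono

lemma subEmb_mem (S : FormIdx n k) (j : Fin k) : subEmb S j ∈ S.1 := by
  rw [subEmb_def]; exact Finset.orderEmbOfFin_mem _ _ _

lemma exists_subEmb_eq {S : FormIdx n k} {i : Fin n} (h : i ∈ S.1) : ∃ m, subEmb S m = i := by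
  have : i ∈ Set.range (S.1.orderEmbOfFin S.2) := by
    rw [Finset.range_orderEmbOfFin]; exact h
  obtain ⟨m, hm⟩ := this
  exact ⟨m, by rw [subEmb_def]; exact hm⟩

lemma card_filter_lt {N : ℕ} (j : Fin N) :
    (Finset.univ.filter (fun m : Fin N => m < j)).card = j := by
  have : (Finset.univ.filter (fun m : Fin N => m < j)) = Finset.Iio j := by
    ext a; simp
  rw [this, Fin.card_Iio]

lemma posIn_le {i : Fin n} {s : Finset (Fin n)} : posIn i s ≤ s.card :=
  Finset.card_le_card (Finset.filter_subset _ _)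

lemma posIn_lt_of_mem {i : Fin n} {s : Finset (Fin n)} (h : i ∈ s) : posIn i s < s.card :=
  Finset.card_lt_card (Finset.filter_ssubset.2 ⟨i, h, by simp⟩)

lemma posIn_subEmb (S : FormIdx n k) (j : Fin k) : posIn (subEmb S j) S.1 = j := by
  unfold posIn
  have himg : S.1.filter (· < subEmb S j)
      = (Finset.univ.filter (fun m : Fin k => m < j)).image (subEmb S) := by
    ext a
    simp only [Finset.mem_filter, Finset.mem_image, Finset.mem_univ, true_and]
    constructor
    · rintro ⟨ha, hlt⟩
      obtain ⟨m, rfl⟩ := exists_subEmb_eq ha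
      exact ⟨m, (subEmb_strictMono S).lt_iff_lt.1 hlt, rfl⟩
    · rintro ⟨m, hmj, rfl⟩
      exact ⟨subEmb_mem S m, (subEmb_strictMono S).lt_iff_lt.2 hmj⟩
  rw [himg, Finset.card_image_of_injective _ (subEmb_strictMono S).injective, card_filter_lt]

lemma subEmb_posIn {S : FormIdx n k} {i : Fin n} (h : i ∈ S.1) (r : Fin k)
    (hr : (r : ℕ) = posIn i S.1) : subEmb S r = i := by
  obtain ⟨m, rfl⟩ := exists_subEmb_eq h
  congr 1
  exact Fin.ext (by rw [hr, posIn_subEmb])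

lemma subEmb_erase (S : FormIdx n (k+1)) (r : Fin (k+1)) :
    subEmb S ∘ r.succAbove
      = subEmb (⟨S.1.erase (subEmb S r),
          by rw [Finset.card_erase_of_mem (subEmb_mem S r), S.2]; rfl⟩ : FormIdx n k) := by
  rw [subEmb_def (⟨_, _⟩ : FormIdx n k)]
  refine Finset.orderEmbOfFin_unique _ (fun m => ?_) ?_
  · refine Finset.mem_erase.2 ⟨fun hEq => ?_, subEmb_mem S _⟩
    exact Fin.succAbove_ne r m ((subEmb_strictMono S).injective hEq)
  · exact (subEmb_strictMono S).comp (Fin.strictMono_succAbove r)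

lemma posIn_insert {i : Fin n} {T : Finset (Fin n)} : posIn i (insert i T) = posIn i T := by
  unfold posIn
  rw [Finset.filter_insert]
  simp

lemma insertNth_subEmb (T : FormIdx n k) {i : Fin n} (hi : i ∉ T.1) (p : Fin (k+1))
    (hp : (p : ℕ) = posIn i T.1) :
    Fin.insertNth p i (subEmb T)
      = subEmb (⟨insert i T.1,
          by rw [Finset.card_insert_of_notMem hi, T.2]⟩ : FormIdx n (k+1)) := by
  set U : FormIdx n (k+1) := ⟨insert i T.1, by rw [Finset.card_insert_of_notMem hi, T.2]⟩
    with hU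
  have hiU : i ∈ U.1 := Finset.mem_insert_self _ _
  have h1 : subEmb U p = i := subEmb_posIn hiU p (by rw [hp, hU]; exact posIn_insert.symm)
  funext q
  rcases eq_or_ne q p with rfl | hq
  · rw [Fin.insertNth_apply_same, h1]
  · obtain ⟨m, rfl⟩ := Fin.exists_succAbove_eq hq
    rw [Fin.insertNth_apply_succAbove]
    have h2 := congrFun (subEmb_erase U p) m
    simp only [Function.comp_apply] at h2
    rw [h2]
    congr 1
    apply Subtype.ext
    simp only [h1, hU]
    convert (Finset.erase_insert hi).symm using 2 <;> exact h1

lemma det_submatrix_insertNth (B : Matrix (Fin n) (Fin n) ℝ) (S : FormIdx n (k+1))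
    (T : FormIdx n k) (i : Fin n) (p : Fin (k+1)) :
    (B.submatrix (subEmb S) (Fin.insertNth p i (subEmb T))).det
      = ∑ r : Fin (k+1), (-1 : ℝ) ^ ((r : ℕ) + (p : ℕ)) * B (subEmb S r) i *
          (B.submatrix (subEmb S ∘ r.succAbove) (subEmb T)).det := by
  rw [Matrix.det_succ_column _ p]
  refine Finset.sum_congr rfl fun r _ => ?_
  congr 2
  · simp [Matrix.submatrix_apply, Fin.insertNth_apply_same]
  · rw [Matrix.submatrix_submatrix, Fin.insertNth_comp_succAbove]

lemma det_submatrix_insertNth_mem (B : Matrix (Fin n) (Fin n) ℝ) (S : FormIdx n (k+1))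
    (T : FormIdx n k) {i : Fin n} (hi : i ∈ T.1) (p : Fin (k+1)) :
    (B.submatrix (subEmb S) (Fin.insertNth p i (subEmb T))).det = 0 := by
  obtain ⟨m, hm⟩ := exists_subEmb_eq hi
  refine Matrix.det_zero_of_column_eq (M := B.submatrix (subEmb S) (Fin.insertNth p i (subEmb T)))
    (i := p) (j := p.succAbove m) (Fin.succAbove_ne p m).symm fun r => ?_
  simp [Matrix.submatrix_apply, Fin.insertNth_apply_same, Fin.insertNth_apply_succAbove, hm]

lemma sum_insert_erase {M : Type*} [AddCommMonoid M] (i : Fin n) (f : FormIdx n (k+1) → M) :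
    (∑ U : FormIdx n (k+1), if i ∈ U.1 then f U else 0)
      = ∑ T : FormIdx n k, if h : i ∉ T.1 then
          f ⟨insert i T.1, by rw [Finset.card_insert_of_notMem h, T.2]⟩ else 0 := by
  rw [← Finset.sum_filter]
  have hR : (∑ T : FormIdx n k, if h : i ∉ T.1 then
        f ⟨insert i T.1, by rw [Finset.card_insert_of_notMem h, T.2]⟩ else 0)
      = ∑ T ∈ Finset.univ.filter (fun T : FormIdx n k => i ∉ T.1), if h : i ∉ T.1 then
          f ⟨insert i T.1, by rw [Finset.card_insert_of_notMem h, T.2]⟩ else 0 := by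
    refine (Finset.sum_subset (Finset.filter_subset _ _) fun T _ hT => ?_).symm
    rw [dif_neg]
    simpa using hT
  rw [hR]
  refine Finset.sum_bij'
    (i := fun U hU => (⟨U.1.erase i, by
      rw [Finset.card_erase_of_mem (by simpa using hU), U.2]; rfl⟩ : FormIdx n k))
    (j := fun T hT => (⟨insert i T.1, by
      rw [Finset.card_insert_of_notMem (by simpa using hT), T.2]⟩ : FormIdx n (k+1)))
    ?_ ?_ ?_ ?_ ?_
  · intro U hU
    simp
  · intro T hT
    simp only [Finset.mem_filter, Finset.mem_univ, true_and] at hT ⊢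
    simp [hT]
  · intro U hU
    exact Subtype.ext (Finset.insert_erase (by simpa using hU))
  · intro T hT
    exact Subtype.ext (Finset.erase_insert (by simpa using hT))
  · intro U hU
    rw [dif_pos (by simp : i ∉ (Finset.erase U.1 i))]
    exact congrArg f (Subtype.ext (Finset.insert_erase (by simpa using hU)).symm)

lemma sum_mem_fin {M : Type*} [AddCommMonoid M] (S : FormIdx n k) (G : Fin n → M) :
    (∑ j : Fin n, if j ∈ S.1 then G j else 0) = ∑ r : Fin k, G (subEmb S r) := by
  rw [← Finset.sum_filter]
  have h1 : Finset.univ.filter (fun j : Fin n => j ∈ S.1) = S.1 := by ext a; simp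
  have h2 : S.1 = Finset.univ.image (subEmb S) := by
    ext a
    simp only [Finset.mem_image, Finset.mem_univ, true_and]
    exact ⟨fun ha => exists_subEmb_eq ha, by rintro ⟨m, rfl⟩; exact subEmb_mem S m⟩
  rw [h1, h2, Finset.sum_image (fun x _ y _ hxy => (subEmb_strictMono S).injective hxy)]

/-- Cauchy–Binet: step 1, expanding the determinant of a product over all index tuples. -/
lemma det_mul_expand (M : Matrix (Fin k) (Fin n) ℝ) (N : Matrix (Fin n) (Fin k) ℝ) :
    (M * N).det = ∑ g : Fin k → Fin n, (∏ r, M r (g r)) * (N.submatrix g id).det := by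
  have h1 : M * N = fun r => ∑ m : Fin n, M r m • N m := by
    funext r j
    simp [Matrix.mul_apply, Finset.sum_apply]
  rw [show (M * N).det = Matrix.detRowAlternating (M * N) from rfl, h1]
  rw [show (Matrix.detRowAlternating (fun r => ∑ m : Fin n, M r m • N m) : ℝ)
      = Matrix.detRowAlternating.toMultilinearMap (fun r => ∑ m : Fin n, M r m • N m) from rfl]
  rw [MultilinearMap.map_sum]
  refine Finset.sum_congr rfl fun g _ => ?_
  rw [show (fun r => M r (g r) • N (g r)) = fun r => M r (g r) • (N.submatrix g id) r from rfl]
  rw [Matrix.detRowAlternating.toMultilinearMap.map_smul_univ (fun r => M r (g r))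
    (N.submatrix g id)]
  simp [Matrix.det]

/-- Cauchy–Binet formula. -/
lemma det_mul_sum_minors (M : Matrix (Fin k) (Fin n) ℝ) (N : Matrix (Fin n) (Fin k) ℝ) :
    (M * N).det = ∑ T : FormIdx n k,
      (M.submatrix id (subEmb T)).det * (N.submatrix (subEmb T) id).det := by
  classical
  rw [det_mul_expand]
  have hz : ∀ g ∈ Finset.univ.filter (fun g : Fin k → Fin n => ¬ Function.Injective g),
      (∏ r, M r (g r)) * (N.submatrix g id).det = 0 := by
    intro g hg
    simp only [Finset.mem_filter, Function.Injective, not_forall] at hg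
    obtain ⟨a, b, hab, hne⟩ := hg.2
    rw [Matrix.det_zero_of_row_eq hne (by funext j; simp [Matrix.submatrix_apply, hab]),
      mul_zero]
  rw [← Finset.sum_filter_add_sum_filter_not Finset.univ (fun g => Function.Injective g),
    Finset.sum_eq_zero hz, add_zero]
  have key : ∑ g ∈ Finset.univ.filter (fun g : Fin k → Fin n => Function.Injective g),
      (∏ r, M r (g r)) * (N.submatrix g id).det
      = ∑ p : FormIdx n k × Equiv.Perm (Fin k),
          (∏ r, M r (subEmb p.1 (p.2 r))) *
            ((N.submatrix (subEmb p.1) id).submatrix p.2 id).det := by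
    refine (Finset.sum_bij (fun p _ => subEmb p.1 ∘ p.2) ?_ ?_ ?_ ?_).symm
    · intro p _
      simp only [Finset.mem_filter, Finset.mem_univ, true_and]
      exact (subEmb_strictMono p.1).injective.comp p.2.injective
    · intro p1 h1 p2 h2 hEq
      have hset : p1.1 = p2.1 := by
        apply Subtype.ext
        have hEq' : subEmb p1.1 ∘ p1.2 = subEmb p2.1 ∘ p2.2 := hEq
        have himg : Finset.univ.image (subEmb p1.1 ∘ p1.2) = Finset.univ.image (subEmb p2.1 ∘ p2.2) := by rw [hEq']
        have h1' : ∀ (p : FormIdx n k × Equiv.Perm (Fin k)),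
            Finset.univ.image (subEmb p.1 ∘ p.2) = p.1.1 := by
          intro p
          ext a
          simp only [Finset.mem_image, Finset.mem_univ, true_and, Function.comp_apply]
          constructor
          · rintro ⟨m, rfl⟩; exact subEmb_mem _ _
          · intro ha
            obtain ⟨m, hm⟩ := exists_subEmb_eq ha
            exact ⟨p.2.symm m, by simp [hm]⟩
        rw [h1' p1, h1' p2] at himg
        exact himg
      obtain ⟨T, σ1⟩ := p1
      obtain ⟨T2, σ2⟩ := p2
      simp only at hset
      subst hset
      simp only [Prod.mk.injEq, true_and]
      apply Equiv.ext
      intro r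
      have := congrFun (hEq : subEmb T ∘ σ1 = subEmb T ∘ σ2) r
      simp only [Function.comp_apply] at this
      exact (subEmb_strictMono T).injective this
    · intro g hg
      simp only [Finset.mem_filter, Finset.mem_univ, true_and] at hg
      set T : FormIdx n k := ⟨Finset.univ.image g, by
        rw [Finset.card_image_of_injective _ hg, Finset.card_univ, Fintype.card_fin]⟩ with hT
      have hmem : ∀ r, g r ∈ T.1 := fun r => Finset.mem_image_of_mem g (Finset.mem_univ r)
      have hlt : ∀ r, posIn (g r) T.1 < k :=
        fun r => lt_of_lt_of_eq (posIn_lt_of_mem (hmem r)) T.2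
      have hσ : ∀ r, subEmb T ⟨posIn (g r) T.1, hlt r⟩ = g r :=
        fun r => subEmb_posIn (hmem r) ⟨posIn (g r) T.1, hlt r⟩ rfl
      have hσinj : Function.Injective (fun r => (⟨posIn (g r) T.1, hlt r⟩ : Fin k)) := by
        intro a b hab
        have hab' : (⟨posIn (g a) T.1, hlt a⟩ : Fin k) = ⟨posIn (g b) T.1, hlt b⟩ := hab
        apply hg
        rw [← hσ a, ← hσ b, hab']
      refine ⟨⟨T, Equiv.ofBijective _ (Finite.injective_iff_bijective.1 hσinj)⟩,
        Finset.mem_univ _, ?_⟩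
      funext r
      simp only [Function.comp_apply, Equiv.ofBijective_apply]
      exact hσ r
    · intro p _
      rw [Matrix.submatrix_submatrix]
      simp only [Function.comp_id]
      rfl
  rw [key, Fintype.sum_prod_type]
  refine Finset.sum_congr rfl fun T _ => ?_
  have hdet : ∀ σ : Equiv.Perm (Fin k),
      ((N.submatrix (subEmb T) id).submatrix σ id).det
        = Equiv.Perm.sign σ * (N.submatrix (subEmb T) id).det :=
    fun σ => Matrix.det_permute σ _
  calc ∑ σ : Equiv.Perm (Fin k), (∏ r, M r (subEmb T (σ r))) *
        ((N.submatrix (subEmb T) id).submatrix σ id).det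
      = (∑ σ : Equiv.Perm (Fin k), (Equiv.Perm.sign σ : ℝ) * ∏ r, M r (subEmb T (σ r))) *
          (N.submatrix (subEmb T) id).det := by
        rw [Finset.sum_mul]
        refine Finset.sum_congr rfl fun σ _ => ?_
        rw [hdet σ]
        ring
    _ = (M.submatrix id (subEmb T)).det * (N.submatrix (subEmb T) id).det := by
        congr 1
        rw [← Matrix.det_transpose (M.submatrix id (subEmb T)), Matrix.det_apply']
        refine Finset.sum_congr rfl fun σ _ => ?_
        congr 1

lemma det_submatrix_mul (B C : Matrix (Fin n) (Fin n) ℝ) (S R : FormIdx n k) :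
    ((B * C).submatrix (subEmb S) (subEmb R)).det
      = ∑ T : FormIdx n k, (B.submatrix (subEmb S) (subEmb T)).det *
          (C.submatrix (subEmb T) (subEmb R)).det := by
  have h1 : (B * C).submatrix (subEmb S) (subEmb R)
      = (B.submatrix (subEmb S) id) * (C.submatrix id (subEmb R)) := by
    ext a b; simp [Matrix.mul_apply]
  rw [h1, det_mul_sum_minors]
  refine Finset.sum_congr rfl fun T _ => ?_
  rw [Matrix.submatrix_submatrix, Matrix.submatrix_submatrix]
  simp

lemma formMap_formMap (B C : Matrix (Fin n) (Fin n) ℝ) (u : KForm n k) :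
    formMap B (formMap C u) = formMap (B * C) u := by
  funext S
  unfold formMap
  simp_rw [Finset.mul_sum, det_submatrix_mul, Finset.sum_mul]
  rw [Finset.sum_comm]
  exact Finset.sum_congr rfl fun R _ => Finset.sum_congr rfl fun T _ => by ring

lemma det_submatrix_one (S T : FormIdx n k) :
    ((1 : Matrix (Fin n) (Fin n) ℝ).submatrix (subEmb S) (subEmb T)).det
      = if S = T then 1 else 0 := by
  rcases eq_or_ne S T with rfl | hST
  · rw [if_pos rfl]
    have h1 : (1 : Matrix (Fin n) (Fin n) ℝ).submatrix (subEmb S) (subEmb S) = 1 := by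
      ext a b
      simp [Matrix.one_apply, (subEmb_strictMono S).injective.eq_iff]
    rw [h1, Matrix.det_one]
  · rw [if_neg hST]
    have hex : ∃ t ∈ T.1, t ∉ S.1 := by
      by_contra hc
      push_neg at hc
      exact hST (Subtype.ext (Finset.eq_of_subset_of_card_le hc (by rw [S.2, T.2])).symm)
    obtain ⟨t, htT, htS⟩ := hex
    obtain ⟨m, rfl⟩ := exists_subEmb_eq htT
    refine Matrix.det_eq_zero_of_column_eq_zero m fun r => ?_
    simp only [Matrix.submatrix_apply, Matrix.one_apply]
    exact if_neg (fun hEq : subEmb S r = subEmb T m => htS (hEq ▸ subEmb_mem S r))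

lemma formMap_one (u : KForm n k) : formMap (1 : Matrix (Fin n) (Fin n) ℝ) u = u := by
  funext S
  unfold formMap
  simp_rw [det_submatrix_one]
  simp

lemma formMap_smul (B : Matrix (Fin n) (Fin n) ℝ) (c : ℝ) (u : KForm n k) :
    formMap B (c • u) = c • formMap B u := by
  funext S
  unfold formMap
  simp [Finset.mul_sum, Pi.smul_apply, smul_eq_mul]
  exact Finset.sum_congr rfl fun T _ => by ring

lemma formMap_add (B : Matrix (Fin n) (Fin n) ℝ) (u v : KForm n k) :
    formMap B (u + v) = formMap B u + formMap B v := by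
  funext S
  unfold formMap
  simp [mul_add, Finset.sum_add_distrib]

lemma formMap_sum {ι : Type*} (B : Matrix (Fin n) (Fin n) ℝ) (s : Finset ι)
    (f : ι → KForm n k) : formMap B (∑ i ∈ s, f i) = ∑ i ∈ s, formMap B (f i) := by
  funext S
  unfold formMap
  rw [Finset.sum_apply]
  simp_rw [Finset.sum_apply, Finset.mul_sum]
  rw [Finset.sum_comm]

def pIdx {n k : ℕ} (i : Fin n) (T : FormIdx n k) : Fin (k+1) :=
  ⟨posIn i T.1, Nat.lt_succ_of_le (le_trans posIn_le (le_of_eq T.2))⟩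

lemma wedge_reindex (B : Matrix (Fin n) (Fin n) ℝ) (ω : Fin n → ℝ) (u : KForm n k)
    (S : FormIdx n (k+1)) (i : Fin n) :
    (∑ U : FormIdx n (k+1), if h : i ∈ U.1 then
        (B.submatrix (subEmb S) (subEmb U)).det *
          ((-1:ℝ)^(posIn i U.1) * ω i * u ⟨U.1.erase i, by
            rw [Finset.card_erase_of_mem h, U.2]; rfl⟩) else 0)
      = ∑ T : FormIdx n k, (-1:ℝ)^(posIn i T.1) * ω i *
          (B.submatrix (subEmb S) (Fin.insertNth (pIdx i T) i (subEmb T))).det * u T := by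
  have h1 : (∑ U : FormIdx n (k+1), if h : i ∈ U.1 then
        (B.submatrix (subEmb S) (subEmb U)).det *
          ((-1:ℝ)^(posIn i U.1) * ω i * u ⟨U.1.erase i, by
            rw [Finset.card_erase_of_mem h, U.2]; rfl⟩) else 0)
      = ∑ U : FormIdx n (k+1), (if i ∈ U.1 then (if h : i ∈ U.1 then
          (B.submatrix (subEmb S) (subEmb U)).det *
            ((-1:ℝ)^(posIn i U.1) * ω i * u ⟨U.1.erase i, by
              rw [Finset.card_erase_of_mem h, U.2]; rfl⟩) else 0) else 0) := by
    refine Finset.sum_congr rfl fun U _ => ?_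
    by_cases h : i ∈ U.1
    · rw [if_pos h]
    · rw [if_neg h, dif_neg h]
  rw [h1, sum_insert_erase]
  refine Finset.sum_congr rfl fun T _ => ?_
  by_cases h : i ∈ T.1
  · rw [dif_neg (by simpa using h), det_submatrix_insertNth_mem B S T h]
    ring
  · rw [dif_pos h, dif_pos (Finset.mem_insert_self i T.1)]
    rw [insertNth_subEmb T h (pIdx i T) rfl]
    have herase : (⟨(insert i T.1).erase i, by
        rw [Finset.card_erase_of_mem (Finset.mem_insert_self i T.1),
          Finset.card_insert_of_notMem h, T.2]; rfl⟩ : FormIdx n k) = T :=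
      Subtype.ext (Finset.erase_insert h)
    rw [herase, posIn_insert]
    ring

lemma formMap_wedgeOne (B : Matrix (Fin n) (Fin n) ℝ) (ω : Fin n → ℝ) (u : KForm n k) :
    formMap B (wedgeOne ω u) = wedgeOne (B.mulVec ω) (formMap B u) := by
  funext S
  have hsign : ∀ p q : ℕ, (-1:ℝ)^p * (-1)^(q+p) = (-1)^q := by
    intro p q
    rw [pow_add, ← mul_assoc, mul_comm ((-1:ℝ)^p) ((-1:ℝ)^q), mul_assoc, ← pow_add,
      ← two_mul, pow_mul]
    norm_num
  have hL : formMap B (wedgeOne ω u) S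
      = ∑ i : Fin n, ∑ T : FormIdx n k, (-1:ℝ)^(posIn i T.1) * ω i *
          (B.submatrix (subEmb S) (Fin.insertNth (pIdx i T) i (subEmb T))).det * u T := by
    unfold formMap wedgeOne
    simp_rw [Finset.mul_sum, mul_dite, mul_zero]
    rw [Finset.sum_comm]
    exact Finset.sum_congr rfl fun i _ => wedge_reindex B ω u S i
  have hR : wedgeOne (B.mulVec ω) (formMap B u) S
      = ∑ r : Fin (k+1), ∑ i : Fin n, ∑ T : FormIdx n k,
          (-1:ℝ)^(r:ℕ) * B (subEmb S r) i * ω i *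
            (B.submatrix (subEmb S ∘ r.succAbove) (subEmb T)).det * u T := by
    unfold wedgeOne
    have h2 : (∑ j : Fin n, if h : j ∈ S.1 then
          (-1:ℝ)^(posIn j S.1) * (B.mulVec ω) j * formMap B u ⟨S.1.erase j, by
            rw [Finset.card_erase_of_mem h, S.2]; rfl⟩ else 0)
        = ∑ j : Fin n, (if j ∈ S.1 then (if h : j ∈ S.1 then
            (-1:ℝ)^(posIn j S.1) * (B.mulVec ω) j * formMap B u ⟨S.1.erase j, by
              rw [Finset.card_erase_of_mem h, S.2]; rfl⟩ else 0) else 0) := by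
      refine Finset.sum_congr rfl fun j _ => ?_
      by_cases h : j ∈ S.1
      · rw [if_pos h]
      · rw [if_neg h, dif_neg h]
    rw [h2, sum_mem_fin]
    refine Finset.sum_congr rfl fun r _ => ?_
    rw [dif_pos (subEmb_mem S r), posIn_subEmb]
    unfold formMap
    rw [← subEmb_erase S r,
      show (B.mulVec ω) (subEmb S r) = ∑ i : Fin n, B (subEmb S r) i * ω i from rfl]
    simp_rw [Finset.mul_sum, Finset.sum_mul]
    rw [Finset.sum_comm]
    exact Finset.sum_congr rfl fun i _ => Finset.sum_congr rfl fun T _ => by ring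
  rw [hL, hR]
  refine Eq.symm ?_
  rw [Finset.sum_comm]
  refine Finset.sum_congr rfl fun i _ => ?_
  rw [Finset.sum_comm]
  refine Finset.sum_congr rfl fun T _ => Eq.symm ?_
  rw [det_submatrix_insertNth B S T i (pIdx i T)]
  rw [Finset.mul_sum]
  rw [Finset.sum_mul]
  refine Finset.sum_congr rfl fun r _ => ?_
  have hsp : (-1:ℝ)^(posIn i T.1) * (-1:ℝ)^((r:ℕ) + ((pIdx i T) : ℕ)) = (-1:ℝ)^(r:ℕ) :=
    hsign _ _
  linear_combination (ω i * B (subEmb S r) i *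
    (B.submatrix (subEmb S ∘ r.succAbove) (subEmb T)).det * u T) * hsp

lemma pair_formMap (B : Matrix (Fin n) (Fin n) ℝ) (u v : KForm n k) :
    ∑ S : FormIdx n k, formMap B u S * v S
      = ∑ T : FormIdx n k, u T * formMap B.transpose v T := by
  unfold formMap
  simp_rw [Finset.sum_mul, Finset.mul_sum]
  rw [Finset.sum_comm]
  refine Finset.sum_congr rfl fun T _ => Finset.sum_congr rfl fun S _ => ?_
  rw [← Matrix.transpose_submatrix, Matrix.det_transpose]
  ring

lemma pair_wedgeOne (ω : Fin n → ℝ) (u : KForm n k) (v : KForm n (k+1)) :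
    ∑ S : FormIdx n (k+1), wedgeOne ω u S * v S
      = ∑ T : FormIdx n k, u T * contractV ω v T := by
  unfold wedgeOne contractV
  simp_rw [Finset.sum_mul, Finset.mul_sum, dite_mul, zero_mul, mul_dite, mul_zero]
  rw [Finset.sum_comm]
  conv_rhs => rw [Finset.sum_comm]
  refine Finset.sum_congr rfl fun i _ => ?_
  have h1 : (∑ S : FormIdx n (k+1), if h : i ∈ S.1 then
        (-1:ℝ)^(posIn i S.1) * ω i * u ⟨S.1.erase i, by
          rw [Finset.card_erase_of_mem h, S.2]; rfl⟩ * v S else 0)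
      = ∑ S : FormIdx n (k+1), (if i ∈ S.1 then (if h : i ∈ S.1 then
          (-1:ℝ)^(posIn i S.1) * ω i * u ⟨S.1.erase i, by
            rw [Finset.card_erase_of_mem h, S.2]; rfl⟩ * v S else 0) else 0) := by
    refine Finset.sum_congr rfl fun S _ => ?_
    by_cases h : i ∈ S.1
    · rw [if_pos h]
    · rw [if_neg h, dif_neg h]
  rw [h1, sum_insert_erase]
  refine Finset.sum_congr rfl fun T _ => ?_
  by_cases h : i ∉ T.1
  · rw [dif_pos h, dif_pos (Finset.mem_insert_self i T.1), dif_pos h]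
    have herase : (⟨(insert i T.1).erase i, by
        rw [Finset.card_erase_of_mem (Finset.mem_insert_self i T.1),
          Finset.card_insert_of_notMem h, T.2]; rfl⟩ : FormIdx n k) = T :=
      Subtype.ext (Finset.erase_insert h)
    rw [herase]
    ring
  · rw [dif_neg h, dif_neg h]

lemma kform_ext_of_pair {X Y : KForm n k}
    (hp : ∀ u : KForm n k, ∑ S : FormIdx n k, X S * u S = ∑ S : FormIdx n k, Y S * u S) :
    X = Y := by
  funext S
  have := hp (fun T => if T = S then 1 else 0)
  simpa [mul_ite, mul_one, mul_zero, Finset.sum_ite_eq'] using this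

lemma contractV_formMap (B : Matrix (Fin n) (Fin n) ℝ) (x : Fin n → ℝ) (v : KForm n (k+1)) :
    contractV x (formMap B v) = formMap B (contractV (B.transpose.mulVec x) v) := by
  refine kform_ext_of_pair fun u => ?_
  calc ∑ T : FormIdx n k, contractV x (formMap B v) T * u T
      = ∑ T : FormIdx n k, u T * contractV x (formMap B v) T :=
        Finset.sum_congr rfl fun T _ => mul_comm _ _
    _ = ∑ S : FormIdx n (k+1), wedgeOne x u S * formMap B v S := (pair_wedgeOne x u _).symm
    _ = ∑ S : FormIdx n (k+1), formMap B v S * wedgeOne x u S :=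
        Finset.sum_congr rfl fun T _ => mul_comm _ _
    _ = ∑ T : FormIdx n (k+1), v T * formMap B.transpose (wedgeOne x u) T := pair_formMap B v _
    _ = ∑ T : FormIdx n (k+1), wedgeOne (B.transpose.mulVec x) (formMap B.transpose u) T * v T := by
        rw [formMap_wedgeOne]
        exact Finset.sum_congr rfl fun T _ => mul_comm _ _
    _ = ∑ T : FormIdx n k, formMap B.transpose u T * contractV (B.transpose.mulVec x) v T :=
        pair_wedgeOne _ _ _
    _ = ∑ T : FormIdx n k, contractV (B.transpose.mulVec x) v T * formMap B.transpose u T :=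
        Finset.sum_congr rfl fun T _ => mul_comm _ _
    _ = ∑ S : FormIdx n k, formMap B (contractV (B.transpose.mulVec x) v) S * u S := by
        rw [pair_formMap B (contractV (B.transpose.mulVec x) v) u]

lemma formMap_invol {κ : Matrix (Fin n) (Fin n) ℝ} (hκ : κ * κ = 1) (u : KForm n k) :
    formMap κ.transpose (formMap κ.transpose u) = u := by
  rw [formMap_formMap, ← Matrix.transpose_mul, hκ, Matrix.transpose_one, formMap_one]

lemma wedgeOne_add (ω : Fin n → ℝ) (u v : KForm n k) :
    wedgeOne ω (u + v) = wedgeOne ω u + wedgeOne ω v := by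
  funext S
  unfold wedgeOne
  simp only [Pi.add_apply, ← Finset.sum_add_distrib]
  refine Finset.sum_congr rfl fun i _ => ?_
  by_cases hi : i ∈ S.1
  · rw [dif_pos hi, dif_pos hi, dif_pos hi]; ring
  · rw [dif_neg hi, dif_neg hi, dif_neg hi]; ring

lemma wedgeOne_smul (ω : Fin n → ℝ) (c : ℝ) (u : KForm n k) :
    wedgeOne ω (c • u) = c • wedgeOne ω u := by
  funext S
  unfold wedgeOne
  simp only [Pi.smul_apply, smul_eq_mul, Finset.mul_sum, mul_dite, mul_zero]
  refine Finset.sum_congr rfl fun i _ => ?_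
  by_cases hi : i ∈ S.1
  · rw [dif_pos hi, dif_pos hi]; ring
  · rw [dif_neg hi, dif_neg hi]

lemma wedgeOne_sum {ι : Type*} (s : Finset ι) (f : ι → Fin n → ℝ) (u : KForm n k) :
    wedgeOne (fun i => ∑ j ∈ s, f j i) u = ∑ j ∈ s, wedgeOne (f j) u := by
  funext S
  unfold wedgeOne
  simp only [Finset.sum_apply]
  rw [Finset.sum_comm]
  refine Finset.sum_congr rfl fun i _ => ?_
  by_cases hi : i ∈ S.1
  · simp only [dif_pos hi, Finset.sum_mul, Finset.mul_sum]
  · simp only [dif_neg hi, Finset.sum_const_zero]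

lemma wedgeOne_smul_left (c : ℝ) (ω : Fin n → ℝ) (u : KForm n k) :
    wedgeOne (fun i => c * ω i) u = c • wedgeOne ω u := by
  funext S
  unfold wedgeOne
  simp only [Pi.smul_apply, smul_eq_mul, Finset.mul_sum, mul_dite, mul_zero]
  refine Finset.sum_congr rfl fun i _ => ?_
  by_cases hi : i ∈ S.1
  · rw [dif_pos hi, dif_pos hi]; ring
  · rw [dif_neg hi, dif_neg hi]

lemma wedgeOne_sum_right {ι : Type*} (s : Finset ι) (ω : Fin n → ℝ) (f : ι → KForm n k) :
    wedgeOne ω (∑ j ∈ s, f j) = ∑ j ∈ s, wedgeOne ω (f j) := by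
  classical
  induction s using Finset.induction_on with
  | empty =>
      rw [Finset.sum_empty, Finset.sum_empty]
      funext S
      simp only [wedgeOne, Pi.zero_apply, mul_zero, dite_eq_ite, ite_self,
        Finset.sum_const_zero]
  | insert _ _ hnot ih =>
      rw [Finset.sum_insert hnot, Finset.sum_insert hnot, wedgeOne_add, ih]

lemma contractV_add (x : Fin n → ℝ) (u v : KForm n (k+1)) :
    contractV x (u + v) = contractV x u + contractV x v := by
  funext T
  unfold contractV
  simp only [Pi.add_apply, ← Finset.sum_add_distrib]
  refine Finset.sum_congr rfl fun i _ => ?_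
  by_cases hi : i ∉ T.1
  · rw [dif_pos hi, dif_pos hi, dif_pos hi]; ring
  · rw [dif_neg hi, dif_neg hi, dif_neg hi]; ring

lemma contractV_smul (x : Fin n → ℝ) (c : ℝ) (u : KForm n (k+1)) :
    contractV x (c • u) = c • contractV x u := by
  funext T
  unfold contractV
  simp only [Pi.smul_apply, smul_eq_mul, Finset.mul_sum, mul_dite, mul_zero]
  refine Finset.sum_congr rfl fun i _ => ?_
  by_cases hi : i ∉ T.1
  · rw [dif_pos hi, dif_pos hi]; ring
  · rw [dif_neg hi, dif_neg hi]

lemma contractV_sum_left {ι : Type*} (s : Finset ι) (c : ι → ℝ) (f : ι → Fin n → ℝ)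
    (v : KForm n (k+1)) :
    contractV (fun i => ∑ j ∈ s, c j * f j i) v = ∑ j ∈ s, c j • contractV (f j) v := by
  funext T
  unfold contractV
  simp only [Finset.sum_apply, Pi.smul_apply, smul_eq_mul, Finset.mul_sum, mul_dite, mul_zero]
  rw [Finset.sum_comm]
  refine Finset.sum_congr rfl fun i _ => ?_
  by_cases hi : i ∉ T.1
  · simp only [dif_pos hi, Finset.sum_mul, Finset.mul_sum]
    refine Finset.sum_congr rfl fun j _ => by ring
  · simp only [dif_neg hi, Finset.sum_const_zero]

section Calc
variable {n k : ℕ}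

lemma fderiv_comp_mulVec (κ : Matrix (Fin n) (Fin n) ℝ) {f : (Fin n → ℝ) → ℝ}
    (hf : Differentiable ℝ f) (x : Fin n → ℝ) (i : Fin n) :
    fderiv ℝ (fun y => f (κ.mulVec y)) x (Pi.single i 1)
      = ∑ j : Fin n, κ j i * fderiv ℝ f (κ.mulVec x) (Pi.single j 1) := by
  set L : (Fin n → ℝ) →L[ℝ] (Fin n → ℝ) :=
    LinearMap.toContinuousLinearMap (Matrix.mulVecLin κ) with hLdef
  have hL : ∀ y, L y = κ.mulVec y := fun y => rfl
  have hcomp : (fun y => f (κ.mulVec y)) = f ∘ L := rfl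
  rw [hcomp, fderiv_comp x (hf _) L.differentiableAt, L.fderiv]
  simp only [ContinuousLinearMap.coe_comp', Function.comp_apply, hL]
  have hvec : κ.mulVec (Pi.single i 1)
      = ∑ j : Fin n, κ j i • (Pi.single j 1 : Fin n → ℝ) := by
    rw [Matrix.mulVec_single]
    rw [show (∑ j : Fin n, κ j i • (Pi.single j 1 : Fin n → ℝ))
        = ∑ j : Fin n, (Pi.single j (κ j i * 1) : Fin n → ℝ) from Finset.sum_congr rfl
          fun j _ => by rw [← Pi.single_smul, smul_eq_mul]]
    rw [Finset.univ_sum_single (fun j => κ j i * 1)]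
    funext j; simp
  rw [hvec, map_sum]
  exact Finset.sum_congr rfl fun j _ => by rw [map_smul, smul_eq_mul]

lemma contDiff_pderiv {u : (Fin n → ℝ) → KForm n k}
    (hu : ∀ S, ContDiff ℝ (⊤ : ℕ∞) fun x => u x S) (i : Fin n) :
    ∀ S, ContDiff ℝ (⊤ : ℕ∞) fun x => pderiv i u x S := fun S =>
  ((hu S).fderiv_right (by simp)).clm_apply contDiff_const

lemma pderiv_congr {u v : (Fin n → ℝ) → KForm n k} (huv : ∀ y, u y = v y) (i : Fin n) :
    pderiv i u = pderiv i v := by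
  have : u = v := funext huv
  rw [this]

lemma pderiv_formMap (B : Matrix (Fin n) (Fin n) ℝ) {u : (Fin n → ℝ) → KForm n k}
    (hu : ∀ S, ContDiff ℝ (⊤ : ℕ∞) fun x => u x S) (i : Fin n) (x : Fin n → ℝ) :
    pderiv i (fun y => formMap B (u y)) x = formMap B (pderiv i u x) := by
  funext S
  unfold pderiv formMap
  show fderiv ℝ (fun y => ∑ T : FormIdx n k,
      (B.submatrix (subEmb S) (subEmb T)).det * u y T) x (Pi.single i 1)
    = ∑ T : FormIdx n k, (B.submatrix (subEmb S) (subEmb T)).det *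
        fderiv ℝ (fun y => u y T) x (Pi.single i 1)
  rw [fderiv_fun_sum fun T _ => (((hu T).differentiable (by simp)) x).const_mul _]
  rw [ContinuousLinearMap.sum_apply]
  refine Finset.sum_congr rfl fun T _ => ?_
  rw [fderiv_const_mul (((hu T).differentiable (by simp)) x)]
  rfl

lemma pderiv_contractV (w : Fin n → ℝ) {v : (Fin n → ℝ) → KForm n (k+1)}
    (hv : ∀ S, ContDiff ℝ (⊤ : ℕ∞) fun x => v x S) (m : Fin n) (x : Fin n → ℝ) :
    pderiv m (fun y => contractV w (v y)) x = contractV w (pderiv m v x) := by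
  funext T
  unfold pderiv contractV
  rw [show (fun y => (fun T : FormIdx n k => ∑ i : Fin n, if h : i ∉ T.1 then
      (-1:ℝ)^(posIn i (insert i T.1)) * w i * v y ⟨insert i T.1, by
        rw [Finset.card_insert_of_notMem h, T.2]⟩ else 0) T)
      = fun y => ∑ i : Fin n, if h : i ∉ T.1 then
      (-1:ℝ)^(posIn i (insert i T.1)) * w i * v y ⟨insert i T.1, by
        rw [Finset.card_insert_of_notMem h, T.2]⟩ else 0 from rfl]
  have hdiff : ∀ (i : Fin n), DifferentiableAt ℝ (fun y => if h : i ∉ T.1 then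
      (-1:ℝ)^(posIn i (insert i T.1)) * w i * v y ⟨insert i T.1, by
        rw [Finset.card_insert_of_notMem h, T.2]⟩ else 0) x := by
    intro i
    by_cases hi : i ∉ T.1
    · simp only [dif_pos hi]
      exact (((hv _).differentiable (by simp)) x).const_mul _
    · simp only [dif_neg hi]
      exact differentiableAt_const 0
  rw [fderiv_fun_sum fun i _ => hdiff i, ContinuousLinearMap.sum_apply]
  refine Finset.sum_congr rfl fun i _ => ?_
  by_cases hi : i ∉ T.1
  · simp only [dif_pos hi]
    rw [fderiv_const_mul (((hv _).differentiable (by simp)) x)]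
    rfl
  · simp only [dif_neg hi]
    simp

lemma contDiff_comp_mulVec (κ : Matrix (Fin n) (Fin n) ℝ) {u : (Fin n → ℝ) → KForm n k}
    (hu : ∀ S, ContDiff ℝ (⊤ : ℕ∞) fun x => u x S) :
    ∀ S, ContDiff ℝ (⊤ : ℕ∞) fun y => u (κ.mulVec y) S := fun S =>
  (hu S).comp (LinearMap.toContinuousLinearMap (Matrix.mulVecLin κ)).contDiff

lemma pderiv_comp_mulVec (κ : Matrix (Fin n) (Fin n) ℝ) {u : (Fin n → ℝ) → KForm n k}
    (hu : ∀ S, ContDiff ℝ (⊤ : ℕ∞) fun x => u x S) (i : Fin n) (x : Fin n → ℝ) (S : FormIdx n k) :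
    pderiv i (fun y => u (κ.mulVec y)) x S
      = ∑ j : Fin n, κ j i * pderiv j u (κ.mulVec x) S :=
  fderiv_comp_mulVec κ ((hu S).differentiable (by simp)) x i

lemma contDiff_grad {φ : (Fin n → ℝ) → ℝ} (hφ : ContDiff ℝ (⊤ : ℕ∞) φ) (i : Fin n) :
    ContDiff ℝ (⊤ : ℕ∞) fun x => fderiv ℝ φ x (Pi.single i 1) :=
  (hφ.fderiv_right (by simp)).clm_apply contDiff_const

lemma grad_comp_mulVec (κ : Matrix (Fin n) (Fin n) ℝ) {φ : (Fin n → ℝ) → ℝ}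
    (hφ : ContDiff ℝ (⊤ : ℕ∞) φ) (hφκ : ∀ x, φ (κ.mulVec x) = φ x) (x : Fin n → ℝ) (i : Fin n) :
    fderiv ℝ φ x (Pi.single i 1)
      = ∑ j : Fin n, κ j i * fderiv ℝ φ (κ.mulVec x) (Pi.single j 1) := by
  have h1 := fderiv_comp_mulVec κ (hφ.differentiable (by simp)) x i
  rw [show (fun y => φ (κ.mulVec y)) = φ from funext hφκ] at h1
  exact h1

lemma contDiff_contractV (w : Fin n → ℝ) {v : (Fin n → ℝ) → KForm n (k+1)}
    (hv : ∀ S, ContDiff ℝ (⊤ : ℕ∞) fun x => v x S) :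
    ∀ T, ContDiff ℝ (⊤ : ℕ∞) fun x => contractV w (v x) T := by
  intro T
  unfold contractV
  apply ContDiff.sum
  intro i _
  by_cases hi : i ∉ T.1
  · simp only [dif_pos hi]
    exact contDiff_const.mul (hv _)
  · simp only [dif_neg hi]
    exact contDiff_const

lemma contDiff_wedgeOne {ω : (Fin n → ℝ) → Fin n → ℝ} {u : (Fin n → ℝ) → KForm n k}
    (hω : ∀ i, ContDiff ℝ (⊤ : ℕ∞) fun x => ω x i) (hu : ∀ S, ContDiff ℝ (⊤ : ℕ∞) fun x => u x S) :
    ∀ S, ContDiff ℝ (⊤ : ℕ∞) fun x => wedgeOne (ω x) (u x) S := by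
  intro S
  unfold wedgeOne
  apply ContDiff.sum
  intro i _
  by_cases hi : i ∈ S.1
  · simp only [dif_pos hi]
    exact (contDiff_const.mul (hω i)).mul (hu _)
  · simp only [dif_neg hi]
    exact contDiff_const

lemma contDiff_formMap (B : Matrix (Fin n) (Fin n) ℝ) {u : (Fin n → ℝ) → KForm n k}
    (hu : ∀ S, ContDiff ℝ (⊤ : ℕ∞) fun x => u x S) :
    ∀ S, ContDiff ℝ (⊤ : ℕ∞) fun x => formMap B (u x) S := by
  intro S
  unfold formMap
  exact ContDiff.sum fun T _ => contDiff_const.mul (hu T)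

lemma contDiff_pullKappa (κ : Matrix (Fin n) (Fin n) ℝ) {u : (Fin n → ℝ) → KForm n k}
    (hu : ∀ S, ContDiff ℝ (⊤ : ℕ∞) fun x => u x S) :
    ∀ S, ContDiff ℝ (⊤ : ℕ∞) fun x => pullKappa κ u x S := by
  intro S
  unfold pullKappa
  exact contDiff_formMap κ.transpose (contDiff_comp_mulVec κ hu) S

lemma contDiff_extd {u : (Fin n → ℝ) → KForm n k}
    (hu : ∀ S, ContDiff ℝ (⊤ : ℕ∞) fun x => u x S) :
    ∀ S, ContDiff ℝ (⊤ : ℕ∞) fun x => extd u x S := by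
  intro S
  unfold extd
  simp only [Finset.sum_apply]
  exact ContDiff.sum fun i _ =>
    contDiff_wedgeOne (ω := fun _ => Pi.single i 1) (fun m => contDiff_const)
      (contDiff_pderiv hu i) S

lemma contDiff_wittenD {φ : (Fin n → ℝ) → ℝ} (hφ : ContDiff ℝ (⊤ : ℕ∞) φ) (h : ℝ)
    {u : (Fin n → ℝ) → KForm n k} (hu : ∀ S, ContDiff ℝ (⊤ : ℕ∞) fun x => u x S) :
    ∀ S, ContDiff ℝ (⊤ : ℕ∞) fun x => wittenD h φ u x S := by
  intro S
  unfold wittenD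
  simp only [Pi.add_apply, Pi.smul_apply, smul_eq_mul]
  exact (contDiff_const.mul (contDiff_extd hu S)).add
    (contDiff_wedgeOne (fun i => contDiff_grad hφ i) hu S)

lemma contDiff_wittenCoD (B : Matrix (Fin n) (Fin n) ℝ) {φ : (Fin n → ℝ) → ℝ}
    (hφ : ContDiff ℝ (⊤ : ℕ∞) φ) (h : ℝ) {u : (Fin n → ℝ) → KForm n (k+1)}
    (hu : ∀ S, ContDiff ℝ (⊤ : ℕ∞) fun x => u x S) :
    ∀ S, ContDiff ℝ (⊤ : ℕ∞) fun x => wittenCoD B h φ u x S := by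
  intro S
  unfold wittenCoD
  simp only [Finset.sum_apply, Pi.add_apply, Pi.smul_apply, smul_eq_mul]
  refine ContDiff.sum fun j _ => ContDiff.add ?_ ?_
  · exact contDiff_const.mul
      (contDiff_pderiv (contDiff_contractV _ hu) j S)
  · exact (contDiff_grad hφ j).mul (contDiff_contractV _ hu S)

end Calc

section Main
variable {n k : ℕ}

lemma pullKappa_invol {κ : Matrix (Fin n) (Fin n) ℝ} (hκ : κ * κ = 1)
    (u : (Fin n → ℝ) → KForm n k) : ∀ x, pullKappa κ (pullKappa κ u) x = u x := by
  intro x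
  unfold pullKappa
  rw [Matrix.mulVec_mulVec, hκ, Matrix.one_mulVec, formMap_invol hκ]

lemma pull_wittenD (κ : Matrix (Fin n) (Fin n) ℝ) {φ : (Fin n → ℝ) → ℝ} (h : ℝ)
    (hφ : ContDiff ℝ (⊤ : ℕ∞) φ) (hφκ : ∀ x, φ (κ.mulVec x) = φ x)
    {u : (Fin n → ℝ) → KForm n k} (hu : ∀ S, ContDiff ℝ (⊤ : ℕ∞) fun x => u x S) (x : Fin n → ℝ) :
    pullKappa κ (wittenD h φ u) x = wittenD h φ (pullKappa κ u) x := by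
  unfold pullKappa wittenD
  set y := κ.mulVec x with hy
  rw [formMap_add, formMap_smul, formMap_wedgeOne]
  have hgrad : κ.transpose.mulVec (fun i => fderiv ℝ φ y (Pi.single i 1))
      = fun i => fderiv ℝ φ x (Pi.single i 1) := by
    funext i
    rw [grad_comp_mulVec κ hφ hφκ x i]
    simp [Matrix.mulVec, dotProduct, Matrix.transpose_apply, mul_comm, hy]
  rw [hgrad]
  congr 1
  congr 1
  unfold extd
  rw [formMap_sum]
  have hR : ∀ j : Fin n, pderiv j (fun z => formMap κ.transpose (u (κ.mulVec z))) x
      = ∑ i : Fin n, κ i j • formMap κ.transpose (pderiv i u y) := by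
    intro j
    rw [pderiv_formMap κ.transpose (contDiff_comp_mulVec κ hu) j x]
    have hc : pderiv j (fun z => u (κ.mulVec z)) x
        = ∑ i : Fin n, κ i j • pderiv i u y := by
      funext S
      rw [pderiv_comp_mulVec κ hu j x S]
      simp [Finset.sum_apply, Pi.smul_apply, smul_eq_mul, hy]
    rw [hc, formMap_sum]
    refine Finset.sum_congr rfl fun i _ => ?_
    rw [formMap_smul]
  conv_rhs => ext S; rw [Finset.sum_apply]
  conv_rhs =>
    ext S
    rw [show (∑ j : Fin n, wedgeOne (Pi.single j 1)
        (pderiv j (fun z => formMap κ.transpose (u (κ.mulVec z))) x) S)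
      = ∑ j : Fin n, wedgeOne (Pi.single j 1)
          (∑ i : Fin n, κ i j • formMap κ.transpose (pderiv i u y)) S from
      Finset.sum_congr rfl fun j _ => by rw [hR j]]
  funext S
  rw [Finset.sum_apply]
  have hRHS : ∀ j : Fin n, wedgeOne (Pi.single j 1)
        (∑ i : Fin n, κ i j • formMap κ.transpose (pderiv i u y))
      = ∑ i : Fin n, κ i j • wedgeOne (Pi.single j 1) (formMap κ.transpose (pderiv i u y)) := by
    intro j
    rw [wedgeOne_sum_right]
    exact Finset.sum_congr rfl fun i _ => by rw [wedgeOne_smul]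
  have hstep : (∑ j : Fin n, wedgeOne (Pi.single j 1)
        (∑ i : Fin n, κ i j • formMap κ.transpose (pderiv i u y)) S)
      = ∑ i : Fin n, (∑ j : Fin n, κ i j • wedgeOne (Pi.single j 1)
          (formMap κ.transpose (pderiv i u y))) S := by
    rw [show (∑ j : Fin n, wedgeOne (Pi.single j 1)
        (∑ i : Fin n, κ i j • formMap κ.transpose (pderiv i u y)) S)
        = ∑ j : Fin n, (∑ i : Fin n, κ i j • wedgeOne (Pi.single j 1)
            (formMap κ.transpose (pderiv i u y))) S from
      Finset.sum_congr rfl fun j _ => by rw [hRHS j]]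
    simp only [Finset.sum_apply]
    rw [Finset.sum_comm]
  rw [hstep]
  refine Finset.sum_congr rfl fun i _ => ?_
  have hw : (∑ j : Fin n, κ i j • wedgeOne (Pi.single j 1)
        (formMap κ.transpose (pderiv i u y)))
      = wedgeOne (κ.transpose.mulVec (Pi.single i 1)) (formMap κ.transpose (pderiv i u y)) := by
    have h1 : ∀ j : Fin n, κ i j • wedgeOne (Pi.single j 1)
          (formMap κ.transpose (pderiv i u y))
        = wedgeOne (fun m => κ i j * (Pi.single j 1 : Fin n → ℝ) m)
            (formMap κ.transpose (pderiv i u y)) := fun j => (wedgeOne_smul_left _ _ _).symm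
    rw [Finset.sum_congr rfl fun j _ => h1 j, ← wedgeOne_sum]
    congr 1
    funext m
    rw [show κ.transpose.mulVec (Pi.single i 1) = fun m => κ.transpose m i * 1 from
      by funext m; simp [Matrix.mulVec, dotProduct, Pi.single_apply]]
    simp [Pi.single_apply, mul_ite, Matrix.transpose_apply]
  rw [formMap_wedgeOne, ← hw]

lemma pull_wittenCoD (κ A : Matrix (Fin n) (Fin n) ℝ) (hκ : κ * κ = 1)
    (hcomm : κ * A = A.transpose * κ.transpose) {φ : (Fin n → ℝ) → ℝ} (h : ℝ)
    (hφ : ContDiff ℝ (⊤ : ℕ∞) φ) (hφκ : ∀ x, φ (κ.mulVec x) = φ x)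
    {v : (Fin n → ℝ) → KForm n (k+1)} (hv : ∀ S, ContDiff ℝ (⊤ : ℕ∞) fun x => v x S)
    (x : Fin n → ℝ) :
    pullKappa κ (wittenCoD A.transpose h φ v) x = wittenCoD A h φ (pullKappa κ v) x := by
  unfold pullKappa wittenCoD
  set y := κ.mulVec x with hy
  set c : Fin n → Fin n → ℝ := fun j => κ.mulVec (fun i => A i j) with hcdef
  have hmat : κ * A * κ.transpose = A.transpose := by
    rw [hcomm, Matrix.mul_assoc, ← Matrix.transpose_mul, hκ, Matrix.transpose_one,
      Matrix.mul_one]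
  have hvec : ∀ m : Fin n, (fun i => A.transpose i m)
      = fun i => ∑ j : Fin n, κ m j * c j i := by
    intro m
    funext i
    rw [← hmat]
    simp only [hcdef, Matrix.mul_apply, Matrix.transpose_apply, Matrix.mulVec,
      dotProduct]
    exact Finset.sum_congr rfl fun j _ => by rw [mul_comm]
  have hFj : ∀ (j : Fin n) (w : KForm n (k+1)),
      contractV (fun i => A i j) (formMap κ.transpose w)
        = formMap κ.transpose (contractV (c j) w) := by
    intro j w
    rw [contractV_formMap, Matrix.transpose_transpose]
  have hL : formMap κ.transpose (∑ j : Fin n,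
        ((-h) • pderiv j (fun z => contractV (fun i => A.transpose i j) (v z)) y
          + (fderiv ℝ φ y (Pi.single j 1)) • contractV (fun i => A.transpose i j) (v y)))
      = ∑ m : Fin n, ∑ j : Fin n, κ m j •
          ((-h) • formMap κ.transpose (contractV (c j) (pderiv m v y))
            + (fderiv ℝ φ y (Pi.single m 1)) • formMap κ.transpose (contractV (c j) (v y))) := by
    rw [formMap_sum]
    refine Finset.sum_congr rfl fun m _ => ?_
    rw [pderiv_contractV _ hv m y]
    rw [hvec m, contractV_sum_left, contractV_sum_left]
    rw [formMap_add, formMap_smul, formMap_smul, formMap_sum, formMap_sum]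
    rw [Finset.sum_congr rfl fun j _ => formMap_smul κ.transpose (κ m j)
      (contractV (c j) (pderiv m v y))]
    rw [Finset.sum_congr rfl fun j _ => formMap_smul κ.transpose (κ m j)
      (contractV (c j) (v y))]
    rw [Finset.smul_sum, Finset.smul_sum, ← Finset.sum_add_distrib]
    refine Finset.sum_congr rfl fun j _ => ?_
    rw [smul_comm (-h) (κ m j), smul_comm (fderiv ℝ φ y (Pi.single m 1)) (κ m j), ← smul_add]
  rw [hL]
  have hR : ∀ j : Fin n,
      ((-h) • pderiv j (fun z => contractV (fun i => A i j)
          (formMap κ.transpose (v (κ.mulVec z)))) x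
        + (fderiv ℝ φ x (Pi.single j 1)) • contractV (fun i => A i j)
            (formMap κ.transpose (v y)))
      = ∑ m : Fin n, κ m j •
          ((-h) • formMap κ.transpose (contractV (c j) (pderiv m v y))
            + (fderiv ℝ φ y (Pi.single m 1)) • formMap κ.transpose (contractV (c j) (v y))) := by
    intro j
    have hfun : (fun z => contractV (fun i => A i j) (formMap κ.transpose (v (κ.mulVec z))))
        = fun z => formMap κ.transpose (contractV (c j) (v (κ.mulVec z))) := by
      funext z
      rw [hFj]
    rw [hfun]
    rw [pderiv_formMap κ.transpose
      (contDiff_comp_mulVec κ (contDiff_contractV (c j) hv)) j x]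
    have hpd : pderiv j (fun z => contractV (c j) (v (κ.mulVec z))) x
        = ∑ m : Fin n, κ m j • contractV (c j) (pderiv m v y) := by
      funext S
      rw [show (fun z => contractV (c j) (v (κ.mulVec z)))
          = fun z => (fun z' => contractV (c j) (v z')) (κ.mulVec z) from rfl]
      rw [pderiv_comp_mulVec κ (contDiff_contractV (c j) hv) j x S]
      simp only [Finset.sum_apply, Pi.smul_apply, smul_eq_mul]
      exact Finset.sum_congr rfl fun m _ => by rw [pderiv_contractV (c j) hv m y]
    rw [hpd, formMap_sum, grad_comp_mulVec κ hφ hφκ x j, hFj]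
    rw [Finset.sum_congr rfl fun m _ => formMap_smul κ.transpose (κ m j)
      (contractV (c j) (pderiv m v y))]
    rw [Finset.smul_sum, Finset.sum_smul, ← Finset.sum_add_distrib]
    refine Finset.sum_congr rfl fun m _ => ?_
    rw [smul_comm (-h) (κ m j), mul_smul, ← smul_add]
  rw [Finset.sum_congr rfl fun j _ => hR j]
  rw [Finset.sum_comm]

/-- Generalized PT symmetry: if `κ² = 1`, `φ∘κ = φ` and `κA = Aᵗκᵗ`, then `U_κ⁻¹ d_φ U_κ = d_φ`,
`U_κ ∘ d_φ^{Aᵗ,*} = d_φ^{A,*} ∘ U_κ`, and consequently `U_κ ∘ Δ_{Aᵗ} = Δ_A ∘ U_κ`. -/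
theorem pullKappa_intertwines_witten {n k : ℕ} (h : ℝ) (hh : 0 < h)
    (κ A : Matrix (Fin n) (Fin n) ℝ)
    (hκ : κ * κ = 1) (hA : IsUnit A.det) (hcomm : κ * A = A.transpose * κ.transpose)
    (φ : (Fin n → ℝ) → ℝ) (hφ : ContDiff ℝ (⊤ : ℕ∞) φ)
    (hφκ : ∀ x, φ (κ.mulVec x) = φ x) :
    (∀ u : (Fin n → ℝ) → KForm n k, (∀ S, ContDiff ℝ (⊤ : ℕ∞) fun x => u x S) →
      ∀ x, pullKappa κ (wittenD h φ (pullKappa κ u)) x = wittenD h φ u x) ∧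
    (∀ v : (Fin n → ℝ) → KForm n (k + 1), (∀ S, ContDiff ℝ (⊤ : ℕ∞) fun x => v x S) →
      ∀ x, pullKappa κ (wittenCoD A.transpose h φ v) x
        = wittenCoD A h φ (pullKappa κ v) x) ∧
    (∀ u : (Fin n → ℝ) → KForm n (k + 1), (∀ S, ContDiff ℝ (⊤ : ℕ∞) fun x => u x S) →
      ∀ x, pullKappa κ (fun y =>
          wittenD h φ (wittenCoD A.transpose h φ u) y
            + wittenCoD A.transpose h φ (wittenD h φ u) y) x
        = wittenD h φ (wittenCoD A h φ (pullKappa κ u)) x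
            + wittenCoD A h φ (wittenD h φ (pullKappa κ u)) x) ∧
    (∀ w : (Fin n → ℝ) → KForm n 0, (∀ S, ContDiff ℝ (⊤ : ℕ∞) fun x => w x S) →
      ∀ x, pullKappa κ (wittenCoD A.transpose h φ (wittenD h φ w)) x
        = wittenCoD A h φ (wittenD h φ (pullKappa κ w)) x) := by
  refine ⟨?_, ?_, ?_, ?_⟩
  · intro u hu x
    have hpu := contDiff_pullKappa κ hu
    rw [pull_wittenD κ h hφ hφκ hpu x,
      show pullKappa κ (pullKappa κ u) = u from funext (pullKappa_invol hκ u)]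
  · intro v hv x
    exact pull_wittenCoD κ A hκ hcomm h hφ hφκ hv x
  · intro u hu x
    have hco : ∀ S, ContDiff ℝ (⊤ : ℕ∞) fun x => wittenCoD A.transpose h φ u x S :=
      contDiff_wittenCoD A.transpose hφ h hu
    have hD : ∀ S, ContDiff ℝ (⊤ : ℕ∞) fun x => wittenD h φ u x S := contDiff_wittenD hφ h hu
    have h1 : pullKappa κ (fun y => wittenD h φ (wittenCoD A.transpose h φ u) y
        + wittenCoD A.transpose h φ (wittenD h φ u) y) x
        = pullKappa κ (wittenD h φ (wittenCoD A.transpose h φ u)) x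
          + pullKappa κ (wittenCoD A.transpose h φ (wittenD h φ u)) x := by
      unfold pullKappa
      rw [← formMap_add]
    have hfunco : pullKappa κ (wittenCoD A.transpose h φ u)
        = wittenCoD A h φ (pullKappa κ u) :=
      funext fun z => pull_wittenCoD κ A hκ hcomm h hφ hφκ hu z
    have hfunD : pullKappa κ (wittenD h φ u) = wittenD h φ (pullKappa κ u) :=
      funext fun z => pull_wittenD κ h hφ hφκ hu z
    rw [h1, pull_wittenD κ h hφ hφκ hco x, pull_wittenCoD κ A hκ hcomm h hφ hφκ hD x,
      hfunco, hfunD]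
  · intro w hw x
    have hD : ∀ S, ContDiff ℝ (⊤ : ℕ∞) fun x => wittenD h φ w x S := contDiff_wittenD hφ h hw
    have hfunD : pullKappa κ (wittenD h φ w) = wittenD h φ (pullKappa κ w) :=
      funext fun z => pull_wittenD κ h hφ hφκ hw z
    rw [pull_wittenCoD κ A hκ hcomm h hφ hφκ hD x, hfunD]
end Main
end Alg
end
end

section
/- Let v, γ > 0 and consider the classical symbol q(x,y,ξ,η) = yξ + vxη + (γ/2)(η² − y²) on ℝ⁴ (corresponding to the Kramers–Fokker–Planck operator with potential V(x) = −(v/2)x² at a saddle). Then the quadratic form φ₊(x,y) = (v/2)√(1+4v/γ²)·x² − (2v/γ)·xy + (1/2)√(1+4v/γ²)·y² is positive definite and satisfies the eiconal equation q(x, y, ∂ₓφ₊(x,y), ∂_yφ₊(x,y)) = 0 for all (x,y) ∈ ℝ², and it is the unique positive definite quadratic form with this property. -/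
/-!
The gradient of `quadForm a b c` is `(a x + b y, b x + c y)`, and the symbol evaluated on it is
again a binary quadratic form in `(x, y)`, so the eiconal equation amounts to the vanishing of
its three coefficients: `(γ/2) b² + v b = 0`, `a + v c + γ b c = 0`, `b + (γ/2) c² = γ/2`.
Positivity of `a` rules out the branch `b = 0` (it forces `c = 1`, `a = -v`); on the branch
`b = -2v/γ` the last identity gives `c² = 1 + 4v/γ²`, so positivity of `c` pins
`c = √(1 + 4v/γ²)`, and then `a = v c`. This form is positive definite since `a c - b² = v > 0`.
-/

/-- the symbol `q(x,y,ξ,η) = yξ + vxη + (γ/2)(η² − y²)` -/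
noncomputable def kfpSymbol (v γ x y ξ η : ℝ) : ℝ := y * ξ + v * x * η + γ/2 * (η^2 - y^2)

noncomputable def quadForm (a b c : ℝ) (x y : ℝ) : ℝ := a / 2 * x ^ 2 + b * x * y + c / 2 * y ^ 2

def SolvesEiconal (v γ : ℝ) (φ : ℝ → ℝ → ℝ) : Prop :=
  ∀ x y : ℝ, kfpSymbol v γ x y (deriv (fun t => φ t y) x) (deriv (fun t => φ x t) y) = 0

theorem forall_quadratic_eq_zero_iff {R : Type*} [CommRing R] (p q r : R) :
    (∀ x y : R, p * x ^ 2 + q * x * y + r * y ^ 2 = 0) ↔ p = 0 ∧ q = 0 ∧ r = 0 := by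
  refine ⟨fun h => ?_, fun ⟨hp, hq, hr⟩ x y => by simp [hp, hq, hr]⟩
  have hp : p = 0 := by simpa using h 1 0
  have hr : r = 0 := by simpa using h 0 1
  have hq : q = 0 := by simpa [hp, hr] using h 1 1
  exact ⟨hp, hq, hr⟩

namespace quadForm

theorem hasDerivAt_fst (a b c x y : ℝ) :
    HasDerivAt (fun t => quadForm a b c t y) (a * x + b * y) x :=
  ((((hasDerivAt_pow 2 x).const_mul (a / 2)).add
    (((hasDerivAt_id' x).const_mul b).mul_const y)).add_const (c / 2 * y ^ 2)).congr_deriv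
    (by norm_num; ring)

theorem hasDerivAt_snd (a b c x y : ℝ) :
    HasDerivAt (fun t => quadForm a b c x t) (b * x + c * y) y :=
  ((((hasDerivAt_id' y).const_mul (b * x)).const_add (a / 2 * x ^ 2)).add
    ((hasDerivAt_pow 2 y).const_mul (c / 2))).congr_deriv (by norm_num; ring)

theorem kfpSymbol_grad (v γ a b c x y : ℝ) :
    kfpSymbol v γ x y (a * x + b * y) (b * x + c * y) =
      (γ / 2 * b ^ 2 + v * b) * x ^ 2 + (a + v * c + γ * b * c) * x * y
        + (b + γ / 2 * c ^ 2 - γ / 2) * y ^ 2 := by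
  unfold kfpSymbol; ring

theorem solvesEiconal_iff (v γ a b c : ℝ) :
    SolvesEiconal v γ (quadForm a b c) ↔
      γ / 2 * b ^ 2 + v * b = 0 ∧ a + v * c + γ * b * c = 0 ∧ b + γ / 2 * c ^ 2 = γ / 2 := by
  simp only [SolvesEiconal, (hasDerivAt_fst a b c _ _).deriv, (hasDerivAt_snd a b c _ _).deriv,
    kfpSymbol_grad, forall_quadratic_eq_zero_iff, sub_eq_zero]

theorem pos_of_sq_lt_mul {a b c : ℝ} (ha : 0 < a) (hdisc : b ^ 2 < a * c) (x y : ℝ)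
    (hxy : (x, y) ≠ (0, 0)) : 0 < quadForm a b c x y := by
  have hsq : 2 * a * quadForm a b c x y = (a * x + b * y) ^ 2 + (a * c - b ^ 2) * y ^ 2 := by
    unfold quadForm; ring
  refine pos_of_mul_pos_right (hsq ▸ ?_) (by positivity : (0 : ℝ) ≤ 2 * a)
  rcases eq_or_ne y 0 with rfl | hy
  · have hx : x ≠ 0 := by rintro rfl; exact hxy rfl
    simpa using sq_pos_of_ne_zero (mul_ne_zero ha.ne' hx)
  · nlinarith [sq_nonneg (a * x + b * y), sq_pos_of_ne_zero hy]

end quadForm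

theorem eiconal_coeffs_iff_of_pos {v γ a b c : ℝ} (hv : 0 < v) (hγ : 0 < γ) (ha : 0 < a)
    (hc : 0 < c) :
    (γ / 2 * b ^ 2 + v * b = 0 ∧ a + v * c + γ * b * c = 0 ∧ b + γ / 2 * c ^ 2 = γ / 2) ↔
      a = v * Real.sqrt (1 + 4 * v / γ ^ 2) ∧ b = -(2 * v / γ) ∧
        c = Real.sqrt (1 + 4 * v / γ ^ 2) := by
  set s := Real.sqrt (1 + 4 * v / γ ^ 2)
  have hs2 : s ^ 2 = 1 + 4 * v / γ ^ 2 := Real.sq_sqrt (by positivity)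
  constructor
  · rintro ⟨h1, h2, h3⟩
    have hb : b = -(2 * v / γ) := by
      rcases mul_eq_zero.1 (by linear_combination h1 : b * (γ / 2 * b + v) = 0) with rfl | hb
      · have hc1 : c = 1 := by nlinarith
        nlinarith
      · field_simp; linarith
    have hcs : c = s := by
      refine (pow_left_inj₀ hc.le (Real.sqrt_nonneg _) two_ne_zero).1 ?_
      rw [hs2]; subst hb; field_simp at h3 ⊢; linarith
    refine ⟨?_, hb, hcs⟩
    subst hb hcs
    field_simp at h2; linarith
  · rintro ⟨rfl, rfl, rfl⟩
    refine ⟨by field_simp; ring, by field_simp; ring, ?_⟩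
    rw [hs2]; field_simp; ring

/-- The quadratic form
`φ₊(x,y) = (v/2)√(1+4v/γ²)x² − (2v/γ)xy + (1/2)√(1+4v/γ²)y²` is positive definite, solves
the eiconal equation `q(x,y,∂ₓφ₊,∂_yφ₊) = 0`, and is the unique positive definite quadratic
form with this property. -/
theorem eiconal_unique_positive_solution (v γ : ℝ) (hv : 0 < v) (hγ : 0 < γ) :
    let s := Real.sqrt (1 + 4*v/γ^2)
    let φp : ℝ → ℝ → ℝ := fun x y => v/2 * s * x^2 - 2*v/γ * x * y + 1/2 * s * y^2
    (∀ x y : ℝ, (x, y) ≠ ((0 : ℝ), (0 : ℝ)) → 0 < φp x y) ∧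
    (∀ x y : ℝ,
      kfpSymbol v γ x y (deriv (fun t => φp t y) x) (deriv (fun t => φp x t) y) = 0) ∧
    (∀ a b c : ℝ,
      (∀ x y : ℝ, (x, y) ≠ ((0 : ℝ), (0 : ℝ)) → 0 < a/2 * x^2 + b * x * y + c/2 * y^2) →
      (∀ x y : ℝ,
        kfpSymbol v γ x y
          (deriv (fun t => a/2 * t^2 + b * t * y + c/2 * y^2) x)
          (deriv (fun t => a/2 * x^2 + b * x * t + c/2 * t^2) y) = 0) →
      ∀ x y : ℝ, a/2 * x^2 + b * x * y + c/2 * y^2 = φp x y) := by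
  intro s φp
  have hs : 0 < s := Real.sqrt_pos.2 (by positivity)
  have hφp : φp = quadForm (v * s) (-(2 * v / γ)) s := by
    funext x y; simp only [φp, quadForm]; ring
  have hdisc : (-(2 * v / γ)) ^ 2 < v * s * s := by
    have hs2 : s ^ 2 = 1 + 4 * v / γ ^ 2 := Real.sq_sqrt (by positivity)
    have : v * s * s = (-(2 * v / γ)) ^ 2 + v := by rw [mul_assoc, ← sq, hs2]; field_simp; ring
    linarith
  rw [hφp]
  refine ⟨quadForm.pos_of_sq_lt_mul (by positivity) hdisc,
    (quadForm.solvesEiconal_iff ..).2 ((eiconal_coeffs_iff_of_pos hv hγ (by positivity) hs).2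
      ⟨rfl, rfl, rfl⟩), ?_⟩
  intro a b c hpos heik x y
  have ha : 0 < a := by simpa using hpos 1 0 (by simp)
  have hc : 0 < c := by simpa using hpos 0 1 (by simp)
  obtain ⟨rfl, rfl, rfl⟩ :=
    (eiconal_coeffs_iff_of_pos hv hγ ha hc).1 ((quadForm.solvesEiconal_iff ..).1 heik)
  rfl
end

section
/- Let σ₁,σ₂,σ₃,μ₁,μ₂,μ₃ > 0 and set a₁ = σ₃μ₁, a₂ = σ₁μ₂, a₃ = σ₂μ₃, b₁ = σ₂μ₁, b₂ = σ₃μ₂, b₃ = σ₁μ₃, and let R₀ be the matrix with rows (0, a₂, −b₃), (−b₁, 0, a₃), (a₁, −b₂, 0). Then: (1) R₀·(μ₁⁻¹, μ₂⁻¹, μ₃⁻¹)ᵀ = 0, so det R₀ = 0; (2) with γⱼ = aⱼ² + bⱼ² and D = (a₂²a₃² + b₂²b₃² + b₂²a₃²) + (a₃²a₁² + b₃²b₁² + b₃²a₁²) + (a₁²a₂² + b₁²b₂² + b₁²a₂²), the eigenvalues of R₀ᵀR₀ are 0 and λ± = (γ₁+γ₂+γ₃)/2 ± √(((γ₁+γ₂+γ₃)/2)²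 − D), and one has 0 < D ≤ ((γ₁+γ₂+γ₃)/2)², so both λ± are real and positive; (3) D/(γ₁+γ₂+γ₃) < λ₋ ≤ 2D/(γ₁+γ₂+γ₃) and (γ₁+γ₂+γ₃)/2 ≤ λ₊ < γ₁+γ₂+γ₃. -/
/-!
Both `a₁a₂a₃` and `b₁b₂b₃` equal `σ₁σ₂σ₃μ₁μ₂μ₃`, so `det R₀ = 0` and the characteristic
polynomial of `R₀ᵀR₀`, computed directly, is `λ (λ² - Sγ λ + D)`. With `pᵢ = σᵢ²` and
`mᵢ = μᵢ²` one has `D = e₂(p) e₂(m)` and `Sγ = ∑ᵢ (p₁ + p₂ + p₃ - pᵢ) mᵢ`, so the discriminant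
inequality `4D ≤ Sγ²` says that a quadratic form in `m` is positive semidefinite; it has
kernel `p`, and completing the square in `m₁` exhibits it as a sum of two squares. The
localization of `λ±` then follows from `λ₊ λ₋ = D` and `0 ≤ √((Sγ/2)² - D) < Sγ/2`.
-/

open Matrix

def threeWellMatrix (a₁ a₂ a₃ b₁ b₂ b₃ : ℝ) : Matrix (Fin 3) (Fin 3) ℝ :=
  !![0, a₂, -b₃; -b₁, 0, a₃; a₁, -b₂, 0]

section ThreeWellMatrix

variable (a₁ a₂ a₃ b₁ b₂ b₃ : ℝ)

theorem det_threeWellMatrix :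
    (threeWellMatrix a₁ a₂ a₃ b₁ b₂ b₃).det = a₁ * a₂ * a₃ - b₁ * b₂ * b₃ := by
  simp [threeWellMatrix, det_fin_three]
  ring

theorem det_smul_one_sub_transpose_mul_threeWellMatrix (x : ℝ) :
    (x • (1 : Matrix (Fin 3) (Fin 3) ℝ)
      - (threeWellMatrix a₁ a₂ a₃ b₁ b₂ b₃)ᵀ * threeWellMatrix a₁ a₂ a₃ b₁ b₂ b₃).det
      = x ^ 3 - ((a₁^2 + b₁^2) + (a₂^2 + b₂^2) + (a₃^2 + b₃^2)) * x ^ 2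
        + ((a₂^2*a₃^2 + b₂^2*b₃^2 + b₂^2*a₃^2) + (a₃^2*a₁^2 + b₃^2*b₁^2 + b₃^2*a₁^2)
          + (a₁^2*a₂^2 + b₁^2*b₂^2 + b₁^2*a₂^2)) * x
        - (a₁ * a₂ * a₃ - b₁ * b₂ * b₃) ^ 2 := by
  simp [threeWellMatrix, det_fin_three, mul_apply, Fin.sum_univ_three, one_apply]
  ring

theorem threeWellMatrix_mulVec_inv {σ₁ σ₂ σ₃ μ₁ μ₂ μ₃ : ℝ} (h₁ : μ₁ ≠ 0) (h₂ : μ₂ ≠ 0)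
    (h₃ : μ₃ ≠ 0) :
    threeWellMatrix (σ₃ * μ₁) (σ₁ * μ₂) (σ₂ * μ₃) (σ₂ * μ₁) (σ₃ * μ₂) (σ₁ * μ₃)
      *ᵥ ![μ₁⁻¹, μ₂⁻¹, μ₃⁻¹] = 0 := by
  ext i
  fin_cases i <;> simp [threeWellMatrix, mulVec, dotProduct, Fin.sum_univ_three, h₁, h₂, h₃]

end ThreeWellMatrix

section QuadraticRoots

variable {S D : ℝ}

theorem sq_sub_mul_add_eq_mul_sub_roots (hDS : D ≤ (S / 2) ^ 2) (x : ℝ) :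
    x ^ 2 - S * x + D
      = (x - (S / 2 + √((S / 2) ^ 2 - D))) * (x - (S / 2 - √((S / 2) ^ 2 - D))) := by
  linear_combination Real.sq_sqrt (sub_nonneg.2 hDS)

theorem quadratic_roots_localization (hS : 0 < S) (hD : 0 < D) (hDS : D ≤ (S / 2) ^ 2) :
    (0 < S / 2 - √((S / 2) ^ 2 - D) ∧ 0 < S / 2 + √((S / 2) ^ 2 - D)) ∧
    (D / S < S / 2 - √((S / 2) ^ 2 - D) ∧ S / 2 - √((S / 2) ^ 2 - D) ≤ 2 * D / S) ∧
    (S / 2 ≤ S / 2 + √((S / 2) ^ 2 - D) ∧ S / 2 + √((S / 2) ^ 2 - D) < S) := by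
  have hprod := sq_sub_mul_add_eq_mul_sub_roots hDS 0
  have hlt : √((S / 2) ^ 2 - D) < S / 2 := (Real.sqrt_lt' (by positivity)).2 (by linarith)
  set s := √((S / 2) ^ 2 - D)
  have hs : 0 ≤ s := Real.sqrt_nonneg _
  have hM : 0 < S / 2 - s := by linarith
  refine ⟨⟨hM, by linarith⟩, ⟨?_, ?_⟩, ⟨by linarith, by linarith⟩⟩
  · rw [div_lt_iff₀ hS]
    nlinarith
  · rw [le_div_iff₀ hS]
    nlinarith

end QuadraticRoots

theorem four_mul_esymm_two_mul_le_sq {p₁ p₂ p₃ m₁ m₂ m₃ : ℝ} (hp : 0 < p₂ + p₃)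
    (he : 0 ≤ p₁ * p₂ + p₂ * p₃ + p₃ * p₁) :
    4 * ((p₁ * p₂ + p₂ * p₃ + p₃ * p₁) * (m₁ * m₂ + m₂ * m₃ + m₃ * m₁))
      ≤ ((p₂ + p₃) * m₁ + (p₁ + p₃) * m₂ + (p₁ + p₂) * m₃) ^ 2 := by
  set e := p₁ * p₂ + p₂ * p₃ + p₃ * p₁
  have hsq : (p₂ + p₃) ^ 2 * (((p₂ + p₃) * m₁ + (p₁ + p₃) * m₂ + (p₁ + p₂) * m₃) ^ 2
        - 4 * (e * (m₁ * m₂ + m₂ * m₃ + m₃ * m₁)))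
      = ((p₂ + p₃) ^ 2 * m₁ + (p₃ ^ 2 - e) * m₂ + (p₂ ^ 2 - e) * m₃) ^ 2
        + 4 * e * (p₃ * m₂ - p₂ * m₃) ^ 2 := by
    simp only [e]; ring
  refine sub_nonneg.1 (nonneg_of_mul_nonneg_right ?_ (by positivity : 0 < (p₂ + p₃) ^ 2))
  rw [hsq]
  positivity

/-- Spectral analysis of the model matrix in the three-minima/three-saddle-points example:
with `aⱼ, bⱼ` the indicated products of positive quantities, the Maxwellian coefficient
vector is in the kernel of `R₀`, `det R₀ = 0`, the eigenvalues of `R₀ᵀR₀` are `0` and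
`λ± = (γ₁+γ₂+γ₃)/2 ± √(((γ₁+γ₂+γ₃)/2)² − D)`, which are real and positive since
`0 < D ≤ ((γ₁+γ₂+γ₃)/2)²`, and they satisfy the stated localization inequalities. -/
theorem three_well_model_spectrum (σ₁ σ₂ σ₃ μ₁ μ₂ μ₃ : ℝ)
    (hσ₁ : 0 < σ₁) (hσ₂ : 0 < σ₂) (hσ₃ : 0 < σ₃)
    (hμ₁ : 0 < μ₁) (hμ₂ : 0 < μ₂) (hμ₃ : 0 < μ₃) :
    let a₁ := σ₃ * μ₁; let a₂ := σ₁ * μ₂; let a₃ := σ₂ * μ₃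
    let b₁ := σ₂ * μ₁; let b₂ := σ₃ * μ₂; let b₃ := σ₁ * μ₃
    let R₀ : Matrix (Fin 3) (Fin 3) ℝ := !![0, a₂, -b₃; -b₁, 0, a₃; a₁, -b₂, 0]
    let γ₁ := a₁^2 + b₁^2; let γ₂ := a₂^2 + b₂^2; let γ₃ := a₃^2 + b₃^2
    let D := (a₂^2*a₃^2 + b₂^2*b₃^2 + b₂^2*a₃^2) + (a₃^2*a₁^2 + b₃^2*b₁^2 + b₃^2*a₁^2)
      + (a₁^2*a₂^2 + b₁^2*b₂^2 + b₁^2*a₂^2)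
    let Sγ := γ₁ + γ₂ + γ₃
    let lamP := Sγ/2 + Real.sqrt ((Sγ/2)^2 - D)
    let lamM := Sγ/2 - Real.sqrt ((Sγ/2)^2 - D)
    (R₀.mulVec ![μ₁⁻¹, μ₂⁻¹, μ₃⁻¹] = 0 ∧ R₀.det = 0) ∧
    (0 < D ∧ D ≤ (Sγ/2)^2) ∧
    (∀ lam : ℝ,
      (lam • (1 : Matrix (Fin 3) (Fin 3) ℝ) - R₀.transpose * R₀).det = 0
        ↔ (lam = 0 ∨ lam = lamP ∨ lam = lamM)) ∧
    (0 < lamM ∧ 0 < lamP) ∧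
    (D / Sγ < lamM ∧ lamM ≤ 2 * D / Sγ) ∧
    (Sγ/2 ≤ lamP ∧ lamP < Sγ) := by
  intro a₁ a₂ a₃ b₁ b₂ b₃ R₀ γ₁ γ₂ γ₃ D Sγ lamP lamM
  have hR₀ : R₀ = threeWellMatrix a₁ a₂ a₃ b₁ b₂ b₃ := rfl
  have hab : a₁ * a₂ * a₃ = b₁ * b₂ * b₃ := by simp only [a₁, a₂, a₃, b₁, b₂, b₃]; ring
  have hS : 0 < Sγ := by simp only [Sγ, γ₁, γ₂, γ₃, a₁, a₂, a₃, b₁, b₂, b₃]; positivity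
  have hD : 0 < D := by simp only [D, a₁, a₂, a₃, b₁, b₂, b₃]; positivity
  have hDS : D ≤ (Sγ / 2) ^ 2 := by
    have hdisc := four_mul_esymm_two_mul_le_sq (m₁ := μ₁ ^ 2) (m₂ := μ₂ ^ 2) (m₃ := μ₃ ^ 2)
      (by positivity : 0 < σ₂ ^ 2 + σ₃ ^ 2)
      (by positivity : 0 ≤ σ₁ ^ 2 * σ₂ ^ 2 + σ₂ ^ 2 * σ₃ ^ 2 + σ₃ ^ 2 * σ₁ ^ 2)
    simp only [Sγ, D, γ₁, γ₂, γ₃, a₁, a₂, a₃, b₁, b₂, b₃]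
    linear_combination hdisc / 4
  refine ⟨⟨threeWellMatrix_mulVec_inv hμ₁.ne' hμ₂.ne' hμ₃.ne', ?_⟩, ⟨hD, hDS⟩, fun x => ?_,
    quadratic_roots_localization hS hD hDS⟩
  · rw [hR₀, det_threeWellMatrix, hab, sub_self]
  · have hchar : (x • (1 : Matrix (Fin 3) (Fin 3) ℝ) - R₀ᵀ * R₀).det
        = x * ((x - lamP) * (x - lamM)) := by
      rw [hR₀, det_smul_one_sub_transpose_mul_threeWellMatrix, hab, sub_self,
        ← sq_sub_mul_add_eq_mul_sub_roots hDS]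
      ring
    simp only [hchar, mul_eq_zero, sub_eq_zero]
end
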